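/- arXiv:2111.03364 — 3 statements merged into one kernel-verified Lean document; each statement's English description precedes it below -/
import Mathlib

section
/- Let u : ℝ² → ℝ be differentiable at a point (r, z) with r > 0, and define the rotational extension û : ℝ³ → ℝ by û(x₁, x₂, x₃) = u( ‖(x₁, x₂)‖ , x₃ ). Then û is differentiable at every point x = (x₁, x₂, x₃) with ‖(x₁, x₂)‖ = r and x₃ = z, and the Euclidean norms of the gradients agree: ‖∇û(x)‖ = ‖∇u(r, z)‖. -/
/-!
Away from the axis, `û = u ∘ φ` with `φ x = (‖(x₁, x₂)‖, x₃)`, whose derivative at `x` is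
`D v = (a v₁ + b v₂, v₃)` for the unit vector `(a, b) = (x₁, x₂) / r`. This `D` is a coisometry:
`‖D‖ ≤ 1` by Cauchy–Schwarz, and `y ↦ (a y₁, b y₁, y₂)` is an isometric right inverse of it.
Precomposing a continuous linear map with such a `D` does not change its operator norm, so the
chain rule `∇û(x) = ∇u(r, z) ∘ D` gives the equality of gradient norms.
-/

open MeasureTheory

/-- The point `(a, b)` of the Euclidean plane. -/
noncomputable def mk2 (a b : ℝ) : EuclideanSpace ℝ (Fin 2) :=
  (EuclideanSpace.equiv (Fin 2) ℝ).symm ![a, b]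

theorem ContinuousLinearMap.opNorm_comp_eq_of_norm_le_one_of_rightInverse
    {𝕜 E F G : Type*} [NontriviallyNormedField 𝕜] [SeminormedAddCommGroup E]
    [SeminormedAddCommGroup F] [SeminormedAddCommGroup G] [NormedSpace 𝕜 E] [NormedSpace 𝕜 F]
    [NormedSpace 𝕜 G] (L : F →L[𝕜] G) {D : E →L[𝕜] F} (hD : ‖D‖ ≤ 1) {S : F → E}
    (hDS : ∀ y, D (S y) = y) (hS : ∀ y, ‖S y‖ ≤ ‖y‖) :
    ‖L.comp D‖ = ‖L‖ := by
  refine le_antisymm ((L.opNorm_comp_le D).trans (mul_le_of_le_one_right (norm_nonneg L) hD)) ?_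
  refine L.opNorm_le_bound (norm_nonneg _) fun y => ?_
  calc ‖L y‖ = ‖L.comp D (S y)‖ := by rw [comp_apply, hDS]
    _ ≤ ‖L.comp D‖ * ‖S y‖ := le_opNorm _ _
    _ ≤ ‖L.comp D‖ * ‖y‖ := by gcongr; exact hS y

theorem HasFDerivAt.sqrt_sq_add_sq {E : Type*} [NormedAddCommGroup E] [NormedSpace ℝ E]
    {f g : E → ℝ} {f' g' : E →L[ℝ] ℝ} {x : E} {r : ℝ} (hf : HasFDerivAt f f' x)
    (hg : HasFDerivAt g g' x) (hx : √(f x ^ 2 + g x ^ 2) = r) (hr : 0 < r) :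
    HasFDerivAt (fun v => √(f v ^ 2 + g v ^ 2)) ((f x / r) • f' + (g x / r) • g') x := by
  have hpos : f x ^ 2 + g x ^ 2 ≠ 0 := by
    rintro h; rw [h, Real.sqrt_zero] at hx; exact hr.ne hx
  refine (((hf.pow 2).add (hg.pow 2)).sqrt hpos).congr_fderiv ?_
  ext v
  simp only [hx, add_apply, smul_apply, Pi.add_apply, smul_eq_mul]
  field_simp
  ring

noncomputable def mk2L : ℝ × ℝ →L[ℝ] EuclideanSpace ℝ (Fin 2) :=
  (EuclideanSpace.equiv (Fin 2) ℝ).symm.toContinuousLinearMap.comp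
    (ContinuousLinearEquiv.finTwoArrow ℝ ℝ).symm.toContinuousLinearMap

theorem norm_mk2_sq (a b : ℝ) : ‖mk2 a b‖ ^ 2 = a ^ 2 + b ^ 2 := by
  simp [EuclideanSpace.real_norm_sq_eq, Fin.sum_univ_two, mk2]

theorem HasFDerivAt.mk2 {E : Type*} [NormedAddCommGroup E] [NormedSpace ℝ E]
    {f g : E → ℝ} {f' g' : E →L[ℝ] ℝ} {x : E} (hf : HasFDerivAt f f' x)
    (hg : HasFDerivAt g g' x) :
    HasFDerivAt (fun v => mk2 (f v) (g v)) (mk2L.comp (f'.prod g')) x :=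
  mk2L.hasFDerivAt.comp x (hf.prodMk hg)

/-- The derivative of `v ↦ (√(v₀² + v₁²), v₂)` at a point off the axis whose horizontal part has
direction `(a, b)`. -/
noncomputable def cylDeriv (a b : ℝ) : EuclideanSpace ℝ (Fin 3) →L[ℝ] EuclideanSpace ℝ (Fin 2) :=
  mk2L.comp <| .prod (a • EuclideanSpace.proj 0 + b • EuclideanSpace.proj 1) (EuclideanSpace.proj 2)

theorem cylDeriv_apply (a b : ℝ) (v : EuclideanSpace ℝ (Fin 3)) :
    cylDeriv a b v = mk2 (a * v 0 + b * v 1) (v 2) := rfl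

theorem hasFDerivAt_cylindrical {x : EuclideanSpace ℝ (Fin 3)} {r : ℝ}
    (hx : √(x 0 ^ 2 + x 1 ^ 2) = r) (hr : 0 < r) :
    HasFDerivAt (fun v : EuclideanSpace ℝ (Fin 3) => mk2 √(v 0 ^ 2 + v 1 ^ 2) (v 2))
      (cylDeriv (x 0 / r) (x 1 / r)) x := by
  have hρ := (EuclideanSpace.proj (𝕜 := ℝ) 0).hasFDerivAt.sqrt_sq_add_sq
    (EuclideanSpace.proj (𝕜 := ℝ) 1).hasFDerivAt (x := x) hx hr
  exact hρ.mk2 (EuclideanSpace.proj (𝕜 := ℝ) 2).hasFDerivAt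

theorem norm_cylDeriv_le {a b : ℝ} (hab : a ^ 2 + b ^ 2 ≤ 1) : ‖cylDeriv a b‖ ≤ 1 := by
  refine ContinuousLinearMap.opNorm_le_bound _ zero_le_one fun v => ?_
  rw [one_mul, ← sq_le_sq₀ (norm_nonneg _) (norm_nonneg _), cylDeriv_apply, norm_mk2_sq,
    EuclideanSpace.real_norm_sq_eq, Fin.sum_univ_three]
  nlinarith [sq_nonneg (a * v 1 - b * v 0)]

noncomputable def cylLift (a b : ℝ) (y : EuclideanSpace ℝ (Fin 2)) : EuclideanSpace ℝ (Fin 3) :=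
  !₂[a * y 0, b * y 0, y 1]

theorem cylDeriv_cylLift {a b : ℝ} (hab : a ^ 2 + b ^ 2 = 1) (y : EuclideanSpace ℝ (Fin 2)) :
    cylDeriv a b (cylLift a b y) = y := by
  ext i
  fin_cases i
  · simp only [cylLift, cylDeriv_apply, mk2, Matrix.cons_val_zero, Matrix.cons_val_one,
      Matrix.cons_val, PiLp.continuousLinearEquiv_symm_apply, Fin.zero_eta]
    linear_combination y 0 * hab
  · simp [cylDeriv_apply, cylLift, mk2]

theorem norm_cylLift {a b : ℝ} (hab : a ^ 2 + b ^ 2 = 1) (y : EuclideanSpace ℝ (Fin 2)) :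
    ‖cylLift a b y‖ = ‖y‖ := by
  rw [← sq_eq_sq₀ (norm_nonneg _) (norm_nonneg _), EuclideanSpace.real_norm_sq_eq,
    EuclideanSpace.real_norm_sq_eq, Fin.sum_univ_three, Fin.sum_univ_two]
  simp only [cylLift, Matrix.cons_val_zero, Matrix.cons_val_one, Matrix.cons_val, add_left_inj]
  linear_combination y 0 ^ 2 * hab

theorem norm_comp_cylDeriv {F : Type*} [SeminormedAddCommGroup F] [NormedSpace ℝ F]
    (L : EuclideanSpace ℝ (Fin 2) →L[ℝ] F) {a b : ℝ} (hab : a ^ 2 + b ^ 2 = 1) :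
    ‖L.comp (cylDeriv a b)‖ = ‖L‖ :=
  L.opNorm_comp_eq_of_norm_le_one_of_rightInverse (norm_cylDeriv_le hab.le) (cylDeriv_cylLift hab)
    fun y => (norm_cylLift hab y).le

/-- If `u` is differentiable at `(r, z)` with `r > 0`, then its rotational
extension `uhat(x₁,x₂,x₃) = u(‖(x₁,x₂)‖, x₃)` is differentiable at every point
over `(r, z)`, with equal Euclidean gradient norms. -/
theorem rotational_extension_gradient
    (u : EuclideanSpace ℝ (Fin 2) → ℝ) (r z : ℝ) (hr : 0 < r)
    (hu : DifferentiableAt ℝ u (mk2 r z))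
    (uhat : EuclideanSpace ℝ (Fin 3) → ℝ)
    (huhat : ∀ x : EuclideanSpace ℝ (Fin 3),
      uhat x = u (mk2 (Real.sqrt ((x 0) ^ 2 + (x 1) ^ 2)) (x 2))) :
    ∀ x : EuclideanSpace ℝ (Fin 3),
      Real.sqrt ((x 0) ^ 2 + (x 1) ^ 2) = r → x 2 = z →
      DifferentiableAt ℝ uhat x ∧ ‖fderiv ℝ uhat x‖ = ‖fderiv ℝ u (mk2 r z)‖ := by
  intro x hx hz
  have hunit : (x 0 / r) ^ 2 + (x 1 / r) ^ 2 = 1 := by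
    rw [div_pow, div_pow, ← add_div, ← Real.sq_sqrt (by positivity : 0 ≤ x 0 ^ 2 + x 1 ^ 2), hx,
      div_self (by positivity)]
  have hu' : HasFDerivAt u (fderiv ℝ u (mk2 r z)) (mk2 √(x 0 ^ 2 + x 1 ^ 2) (x 2)) := by
    rw [hx, hz]; exact hu.hasFDerivAt
  have huhat' :
      HasFDerivAt uhat ((fderiv ℝ u (mk2 r z)).comp (cylDeriv (x 0 / r) (x 1 / r))) x := by
    rw [funext huhat]; exact hu'.comp x (hasFDerivAt_cylindrical hx hr)
  exact ⟨huhat'.differentiableAt, by rw [huhat'.fderiv, norm_comp_cylDeriv _ hunit]⟩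
end

section
/- For every dimension d ≥ 1 and all real numbers R > 0 and M > 0 there exists ρ > 0 (depending only on d, R, M) such that every convex set K ⊆ ℝ^d with K contained in the closed ball of radius R centered at the origin and with d-dimensional Lebesgue measure vol(K) ≥ M contains a closed ball of radius ρ, i.e. there exists x₀ ∈ K with closedBall(x₀, ρ) ⊆ K. -/
open Metric MeasureTheory Set Module
open scoped ENNReal RealInnerProductSpace

/-!
Replace `K` by its closure `F`. By Fubini, `∫ vol (F ∩ (2c - F)) dc = 2⁻ᵈ vol(F)²`, and the
integrand vanishes unless `c ∈ closedBall 0 R`, so for some `c` the set `F ∩ (2c - F)` has volume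
at least `τ = 2⁻ᵈ M² / vol (closedBall 0 R)`. That set is closed, convex and symmetric about `c`.
If it missed a point of `closedBall c ρ`, a separating hyperplane and its mirror image would trap
it in a slab of width `2ρ`, whose part in `closedBall 0 R` has volume at most `2ρ (2R)^(d-1) < τ`
for `ρ` small. So `closedBall c ρ ⊆ closure K`, and as `K` has interior points,
`closedBall c (ρ/2) ⊆ K`.
-/

section

variable {E : Type*} [NormedAddCommGroup E] [NormedSpace ℝ E]

def symmCore (F : Set E) (c : E) : Set E :=
  F ∩ (fun x => (2 : ℝ) • c - x) ⁻¹' F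

lemma two_smul_sub_mem_symmCore {F : Set E} {c x : E} (hx : x ∈ symmCore F c) :
    (2 : ℝ) • c - x ∈ symmCore F c :=
  ⟨hx.2, by simpa only [mem_preimage, sub_sub_cancel] using hx.1⟩

lemma convex_symmCore {F : Set E} (hF : Convex ℝ F) (c : E) : Convex ℝ (symmCore F c) := by
  have h : (fun x => (2 : ℝ) • c - x) = AffineEquiv.pointReflection ℝ c := by
    ext x
    simp only [AffineEquiv.pointReflection_apply, vsub_eq_sub, vadd_eq_add, two_smul]
    abel
  exact hF.inter (h ▸ hF.affine_preimage (AffineEquiv.pointReflection ℝ c).toAffineMap)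

lemma isClosed_symmCore {F : Set E} (hF : IsClosed F) (c : E) : IsClosed (symmCore F c) :=
  hF.inter (hF.preimage (by fun_prop))

lemma Convex.center_mem_symmCore {F : Set E} (hF : Convex ℝ F) {c : E}
    (hne : (symmCore F c).Nonempty) : c ∈ symmCore F c := by
  obtain ⟨x, hx⟩ := hne
  convert (convex_symmCore hF c) hx (two_smul_sub_mem_symmCore hx) (a := 1 / 2) (b := 1 / 2)
    (by norm_num) (by norm_num) (by norm_num) using 1
  module

lemma Convex.closedBall_subset_of_closedBall_subset_closure {K : Set E} (hK : Convex ℝ K)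
    (hint : (interior K).Nonempty) {c : E} {ρ ρ' : ℝ} (h : closedBall c ρ ⊆ closure K)
    (hρ' : ρ' < ρ) : closedBall c ρ' ⊆ K :=
  calc closedBall c ρ' ⊆ ball c ρ := closedBall_subset_ball hρ'
    _ ⊆ interior (closure K) := interior_maximal (ball_subset_closedBall.trans h) isOpen_ball
    _ = interior K := hK.interior_closure_eq_interior_of_nonempty_interior hint
    _ ⊆ K := interior_subset

variable [FiniteDimensional ℝ E] [MeasurableSpace E] [BorelSpace E]
  (μ : Measure E) [μ.IsAddHaarMeasure] {F : Set E}

lemma measure_preimage_two_smul_sub (x : E) (F : Set E) :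
    μ ((fun c => (2 : ℝ) • c - x) ⁻¹' F) = (2 ^ finrank ℝ E)⁻¹ * μ F := by
  have : (fun c => (2 : ℝ) • c - x) ⁻¹' F = ((2 : ℝ) • ·) ⁻¹' ((· + -x) ⁻¹' F) := by
    ext c; simp [sub_eq_add_neg]
  rw [this, Measure.addHaar_preimage_smul μ two_ne_zero, measure_preimage_add_right, ← inv_pow,
    abs_of_pos (by positivity), ENNReal.ofReal_pow (by positivity),
    ENNReal.ofReal_inv_of_pos two_pos, ENNReal.ofReal_ofNat, ENNReal.inv_pow]

lemma lintegral_measure_symmCore (hF : MeasurableSet F) :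
    ∫⁻ c, μ (symmCore F c) ∂μ = (2 ^ finrank ℝ E)⁻¹ * μ F * μ F := by
  set A : Set (E × E) := {p | p.2 ∈ F ∧ (2 : ℝ) • p.1 - p.2 ∈ F}
  have hA : MeasurableSet A := (hF.preimage measurable_snd).inter (hF.preimage (by fun_prop))
  have hslice : ∀ x, μ ((fun c => (c, x)) ⁻¹' A) =
      F.indicator (fun _ => (2 ^ finrank ℝ E)⁻¹ * μ F) x := by
    intro x
    by_cases hx : x ∈ F
    · rw [indicator_of_mem hx, ← measure_preimage_two_smul_sub μ x F]
      congr 1; ext c; simp [A, hx]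
    · simp [A, hx]
  calc ∫⁻ c, μ (symmCore F c) ∂μ = μ.prod μ A := (Measure.prod_apply hA).symm
    _ = ∫⁻ x, F.indicator (fun _ => (2 ^ finrank ℝ E)⁻¹ * μ F) x ∂μ := by
        simp_rw [Measure.prod_apply_symm hA, hslice]
    _ = _ := lintegral_indicator_const hF _

lemma exists_le_measure_symmCore (hF : MeasurableSet F) {R : ℝ} (hR : 0 < R)
    (hFR : F ⊆ closedBall 0 R) :
    ∃ c, (2 ^ finrank ℝ E)⁻¹ * μ F * μ F / μ (closedBall 0 R) ≤ μ (symmCore F c) := by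
  have hsupp : (fun c => μ (symmCore F c)).support ⊆ closedBall 0 R := by
    intro c hc
    obtain ⟨x, hxF, hx'F⟩ := nonempty_of_measure_ne_zero hc
    have h := norm_add_le x ((2 : ℝ) • c - x)
    have hx := mem_closedBall_zero_iff.mp (hFR hxF)
    have hx' := mem_closedBall_zero_iff.mp (hFR hx'F)
    rw [add_sub_cancel, norm_smul, Real.norm_two] at h
    exact mem_closedBall_zero_iff.mpr (by linarith)
  have hint := setLIntegral_eq_of_support_subset (μ := μ) hsupp
  rw [lintegral_measure_symmCore μ hF] at hint
  have hμF : μ F ≠ ∞ := measure_ne_top_of_subset hFR measure_closedBall_lt_top.ne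
  obtain ⟨c, -, hc⟩ := exists_setLAverage_le (measure_closedBall_pos μ 0 hR).ne'
    measurableSet_closedBall.nullMeasurableSet
    (by rw [hint]; exact ENNReal.mul_ne_top (ENNReal.mul_ne_top (by simp) hμF) hμF)
  exact ⟨c, by rwa [setLAverage_eq, hint] at hc⟩

lemma Convex.interior_nonempty_of_measure_ne_zero {K : Set E} (hK : Convex ℝ K) (hμ : μ K ≠ 0) :
    (interior K).Nonempty := by
  rw [nonempty_iff_ne_empty]
  intro h
  have hfr := hK.addHaar_frontier μ
  rw [frontier, h, sdiff_empty] at hfr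
  exact hμ (measure_mono_null subset_closure hfr)

end

lemma exists_unit_slab_of_not_closedBall_subset {E : Type*} [NormedAddCommGroup E]
    [InnerProductSpace ℝ E] [CompleteSpace E] {S : Set E} {c : E} {ρ : ℝ}
    (hconv : Convex ℝ S) (hclosed : IsClosed S) (hc : c ∈ S)
    (hsymm : ∀ x ∈ S, (2 : ℝ) • c - x ∈ S) (hball : ¬ closedBall c ρ ⊆ S) :
    ∃ u : E, ‖u‖ = 1 ∧ ∀ x ∈ S, |⟪u, x - c⟫| ≤ ρ := by
  obtain ⟨y, hyc, hyS⟩ := not_subset.mp hball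
  obtain ⟨f, s, hfS, hfy⟩ := geometric_hahn_banach_closed_point hconv hclosed hyS
  set v := (InnerProductSpace.toDual ℝ E).symm f
  have hfv : ∀ x, f x = ⟪v, x⟫ := fun x => InnerProductSpace.toDual_symm_apply.symm
  have hlt : ∀ x ∈ S, ⟪v, x - c⟫ < ‖v‖ * ρ := fun x hx =>
    calc ⟪v, x - c⟫ < ⟪v, y - c⟫ := by
          rw [← hfv, ← hfv, map_sub, map_sub]
          linarith [hfS x hx]
      _ ≤ ‖v‖ * ‖y - c‖ := real_inner_le_norm _ _
      _ ≤ ‖v‖ * ρ := by gcongr; rwa [← dist_eq_norm, ← mem_closedBall]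
  have hv : v ≠ 0 := by
    rintro hv
    simpa [hv] using hlt c hc
  refine ⟨‖v‖⁻¹ • v, norm_smul_inv_norm hv, fun x hx => ?_⟩
  rw [real_inner_smul_left, abs_mul, abs_inv, abs_norm, inv_mul_le_iff₀ (norm_pos_iff.2 hv)]
  have hneg := hlt _ (hsymm x hx)
  rw [show (2 : ℝ) • c - x - c = -(x - c) by module, inner_neg_right] at hneg
  exact abs_le.2 ⟨by linarith, (hlt x hx).le⟩

section

variable {E : Type*} [NormedAddCommGroup E] [InnerProductSpace ℝ E] [FiniteDimensional ℝ E]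

lemma exists_orthonormalBasis_apply_zero_eq {u : E} (hu : ‖u‖ = 1) [NeZero (finrank ℝ E)] :
    ∃ b : OrthonormalBasis (Fin (finrank ℝ E)) ℝ E, b 0 = u := by
  have hu' : Orthonormal ℝ (({0} : Set (Fin (finrank ℝ E))).domRestrict fun _ => u) := by
    rw [orthonormal_subsingleton_iff]
    exact fun _ => hu
  obtain ⟨b, hb⟩ := hu'.exists_orthonormalBasis_extension_of_card_eq (by simp)
  exact ⟨b, hb 0 rfl⟩

variable [MeasurableSpace E] [BorelSpace E]

lemma volume_closedBall_inter_slab_le {u : E} (hu : ‖u‖ = 1) (c : E) {R ρ : ℝ}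
    (hR : 0 ≤ R) (hρ : 0 ≤ ρ) :
    volume (closedBall (0 : E) R ∩ {x | |⟪u, x - c⟫| ≤ ρ}) ≤
      ENNReal.ofReal (2 * ρ * (2 * R) ^ (finrank ℝ E - 1)) := by
  set n := finrank ℝ E
  have : Nontrivial E := ⟨u, 0, by rintro rfl; simp at hu⟩
  have : NeZero n := ⟨finrank_pos.ne'⟩
  obtain ⟨b, hb⟩ := exists_orthonormalBasis_apply_zero_eq hu
  set box : Fin n → Set ℝ :=
    Function.update (fun _ => Icc (-R) R) 0 (Icc (⟪u, c⟫ - ρ) (⟪u, c⟫ + ρ))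
  have hbox : MeasurableSet (pi univ box) :=
    MeasurableSet.univ_pi fun i => by
      rcases eq_or_ne i 0 with rfl | hi <;> simp [box, *]
  have hsub : closedBall (0 : E) R ∩ {x | |⟪u, x - c⟫| ≤ ρ} ⊆
      b.repr ⁻¹' ((MeasurableEquiv.toLp 2 (Fin n → ℝ)).symm ⁻¹' pi univ box) := by
    rintro x ⟨hxR, hxc⟩
    replace hxc : |⟪u, x⟫ - ⟪u, c⟫| ≤ ρ := by rwa [← inner_sub_right]
    refine fun i _ => show b.repr x i ∈ box i from ?_
    rcases eq_or_ne i 0 with rfl | hi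
    · have : b.repr x 0 = ⟪u, x⟫ := by rw [b.repr_apply_apply, hb]
      simp only [box, Function.update_self, mem_Icc]
      constructor <;> linarith [abs_le.1 hxc]
    · have := (PiLp.norm_apply_le (b.repr x) i).trans
        ((b.repr.norm_map x).trans_le (mem_closedBall_zero_iff.1 hxR))
      simp only [box, Function.update_of_ne hi, mem_Icc]
      exact abs_le.1 (by simpa using this)
  calc volume (closedBall (0 : E) R ∩ {x | |⟪u, x - c⟫| ≤ ρ})
      ≤ volume (pi univ box) := by
        refine (measure_mono hsub).trans_eq ?_
        rw [b.measurePreserving_repr.measure_preimage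
            (hbox.preimage (by fun_prop)).nullMeasurableSet,
          (EuclideanSpace.volume_preserving_symm_measurableEquiv_toLp _).measure_preimage
            hbox.nullMeasurableSet]
    _ = ENNReal.ofReal (2 * ρ) * ENNReal.ofReal (2 * R) ^ (n - 1) := by
        have hvol : ∀ i, volume (box i) =
            Function.update (fun _ => ENNReal.ofReal (2 * R)) 0 (ENNReal.ofReal (2 * ρ)) i := by
          intro i
          rcases eq_or_ne i 0 with rfl | hi
          · simp only [box, Function.update_self, Real.volume_Icc]; ring_nf
          · simp only [box, Function.update_of_ne hi, Real.volume_Icc]; ring_nf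
        simp_rw [volume_pi_pi, hvol, Finset.prod_update_of_mem (Finset.mem_univ _),
          Finset.prod_const, Finset.sdiff_singleton_eq_erase,
          Finset.card_erase_of_mem (Finset.mem_univ _), Finset.card_univ, Fintype.card_fin]
    _ = _ := by rw [← ENNReal.ofReal_pow (by positivity), ← ENNReal.ofReal_mul (by positivity)]

lemma Convex.closedBall_subset_of_symmetric_of_volume_gt {S : Set E} {c : E} {R ρ : ℝ}
    (hconv : Convex ℝ S) (hclosed : IsClosed S) (hc : c ∈ S)
    (hsymm : ∀ x ∈ S, (2 : ℝ) • c - x ∈ S) (hSR : S ⊆ closedBall 0 R) (hρ : 0 ≤ ρ)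
    (hvol : ENNReal.ofReal (2 * ρ * (2 * R) ^ (finrank ℝ E - 1)) < volume S) :
    closedBall c ρ ⊆ S := by
  by_contra hball
  obtain ⟨u, hu, hslab⟩ := exists_unit_slab_of_not_closedBall_subset hconv hclosed hc hsymm hball
  have hR : 0 ≤ R := dist_nonneg.trans (hSR hc)
  have hS_slab : S ⊆ closedBall 0 R ∩ {x | |⟪u, x - c⟫| ≤ ρ} := fun x hx => ⟨hSR hx, hslab x hx⟩
  exact (measure_mono hS_slab).trans (volume_closedBall_inter_slab_le hu c hR hρ) |>.not_gt hvol

end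

theorem uniform_inradius_bound_general
    (d : ℕ) (R M : ℝ) (hR : 0 < R) (hM : 0 < M) :
    ∃ ρ : ℝ, 0 < ρ ∧
      ∀ K : Set (EuclideanSpace ℝ (Fin d)), Convex ℝ K →
        K ⊆ closedBall 0 R → ENNReal.ofReal M ≤ volume K →
        ∃ x₀ ∈ K, closedBall x₀ ρ ⊆ K := by
  set τ : ℝ≥0∞ := (2 ^ d)⁻¹ * ENNReal.ofReal M * ENNReal.ofReal M /
    volume (closedBall (0 : EuclideanSpace ℝ (Fin d)) R)
  have hτ : 0 < τ.toReal := ENNReal.toReal_pos (by simp [τ, hM, measure_closedBall_lt_top.ne])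
    (ENNReal.div_lt_top (by simp [ENNReal.mul_eq_top]) (measure_closedBall_pos _ _ hR).ne').ne
  set ρ := τ.toReal / (4 * (2 * R) ^ (d - 1))
  have hρ : 0 < ρ := by positivity
  refine ⟨ρ / 2, by positivity, fun K hK hKR hKM => ?_⟩
  have hFR : closure K ⊆ closedBall 0 R := closure_minimal hKR isClosed_closedBall
  obtain ⟨c, hc⟩ := exists_le_measure_symmCore volume isClosed_closure.measurableSet hR hFR
  rw [finrank_euclideanSpace_fin] at hc
  have hτc : τ ≤ volume (symmCore (closure K) c) := le_trans (ENNReal.div_le_div_right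
    (by gcongr <;> exact hKM.trans (measure_mono subset_closure)) _) hc
  have hslab_lt : ENNReal.ofReal (2 * ρ * (2 * R) ^ (d - 1)) < τ := by
    rw [ENNReal.ofReal_lt_iff_lt_toReal (by positivity) (ENNReal.toReal_pos_iff.1 hτ).2.ne,
      show 2 * ρ * (2 * R) ^ (d - 1) = τ.toReal / 2 by simp only [ρ]; field_simp; ring]
    exact half_lt_self hτ
  have hvol := hslab_lt.trans_le hτc
  have hball : closedBall c ρ ⊆ closure K :=
    ((convex_symmCore hK.closure c).closedBall_subset_of_symmetric_of_volume_gt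
      (isClosed_symmCore isClosed_closure c)
      (hK.closure.center_mem_symmCore (nonempty_of_measure_ne_zero hvol.ne_bot))
      (fun _ => two_smul_sub_mem_symmCore) (inter_subset_left.trans hFR) hρ.le
      (by rwa [finrank_euclideanSpace_fin])).trans inter_subset_left
  have hint := hK.interior_nonempty_of_measure_ne_zero volume
    (ne_of_gt (lt_of_lt_of_le (by simpa using hM) hKM))
  have hsub := hK.closedBall_subset_of_closedBall_subset_closure hint hball (half_lt_self hρ)
  exact ⟨c, hsub (mem_closedBall_self (by positivity)), hsub⟩

/-- Uniform inradius bound: for every dimension `d ≥ 1` and all `R, M > 0`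
there is `ρ > 0` such that every convex subset of the ball of radius `R` with
volume at least `M` contains a closed ball of radius `ρ`. -/
theorem uniform_inradius_bound
    (d : ℕ) (hd : 1 ≤ d) (R M : ℝ) (hR : 0 < R) (hM : 0 < M) :
    ∃ ρ : ℝ, 0 < ρ ∧
      ∀ K : Set (EuclideanSpace ℝ (Fin d)), Convex ℝ K →
        K ⊆ closedBall 0 R → ENNReal.ofReal M ≤ volume K →
        ∃ x₀ ∈ K, closedBall x₀ ρ ⊆ K :=
  uniform_inradius_bound_general d R M hR hM
end

section
/- Let ω ⊆ { (r, z) ∈ ℝ² : r ≥ 0 } and define the solid of revolution R(ω) = { x ∈ ℝ³ : ( ‖(x₁, x₂)‖ , x₃ ) ∈ ω } and the reflection-symmetrized cross section ω̃ = { (r, z) ∈ ℝ² : ( |r| , z ) ∈ ω }. Then R(ω) is convex if and only if ω̃ is convex. -/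
/-!
The solid `{(x, z) : (‖x‖, z) ∈ ω}` in `E × ℝ` contains the plane section `ω̃` along any unit
vector of `E`, which gives one direction. Conversely, a convex `ω̃` is symmetric under `r ↦ -r`,
so with `(s, z)` it contains the whole segment `[-s, s] × {z}`; as `‖a • x + b • y‖` lies in
`[0, a‖x‖ + b‖y‖]` by the triangle inequality, convex combinations stay in the solid. The solid
of revolution in `ℝ³` is the preimage of the one in `ℝ² × ℝ` under a linear isomorphism.
-/

open Set

theorem Convex.linear_preimage_iff {𝕜 E F : Type*} [Semiring 𝕜] [PartialOrder 𝕜]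
    [AddCommMonoid E] [AddCommMonoid F] [Module 𝕜 E] [Module 𝕜 F] {s : Set F}
    (f : E →ₗ[𝕜] F) (hf : Function.Surjective f) :
    Convex 𝕜 (f ⁻¹' s) ↔ Convex 𝕜 s :=
  ⟨fun h ↦ image_preimage_eq s hf ▸ h.linear_image f, fun h ↦ h.linear_preimage f⟩

theorem abs_mk_mem_of_abs_le {ω : Set (ℝ × ℝ)} (hω : Convex ℝ {p : ℝ × ℝ | (|p.1|, p.2) ∈ ω})
    {r s z : ℝ} (hs : (s, z) ∈ ω) (hr : |r| ≤ s) : (|r|, z) ∈ ω := by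
  have hs₀ : 0 ≤ s := (abs_nonneg r).trans hr
  have hsegment : segment ℝ (-s, z) (s, z) ⊆ {p : ℝ × ℝ | (|p.1|, p.2) ∈ ω} :=
    hω.segment_subset (by simpa [abs_of_nonneg hs₀]) (by simpa [abs_of_nonneg hs₀])
  have hr' : r ∈ segment ℝ (-s) s := by
    rw [segment_eq_Icc (by linarith)]
    exact abs_le.mp hr
  exact hsegment (Prod.image_mk_segment_left (𝕜 := ℝ) (-s) s z ▸ mem_image_of_mem _ hr')

theorem convex_solidOfRevolution_iff {E : Type*} [NormedAddCommGroup E] [NormedSpace ℝ E]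
    [Nontrivial E] (ω : Set (ℝ × ℝ)) :
    Convex ℝ {p : E × ℝ | (‖p.1‖, p.2) ∈ ω} ↔ Convex ℝ {p : ℝ × ℝ | (|p.1|, p.2) ∈ ω} := by
  constructor
  · intro h
    obtain ⟨v, hv⟩ := exists_norm_eq E zero_le_one
    simpa [norm_smul, hv] using
      h.linear_preimage ((LinearMap.toSpanSingleton ℝ E v).prodMap LinearMap.id)
  · rintro h ⟨x, z⟩ hx ⟨y, w⟩ hy a b ha hb hab
    have hsum := h (x := (‖x‖, z)) (y := (‖y‖, w)) (by simpa using hx) (by simpa using hy)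
      ha hb hab
    simp only [mem_ofPred_eq, Prod.smul_mk, Prod.mk_add_mk, smul_eq_mul] at hsum ⊢
    rw [abs_of_nonneg (by positivity)] at hsum
    have hle : ‖a • x + b • y‖ ≤ a * ‖x‖ + b * ‖y‖ :=
      norm_add_le_of_le (norm_smul_of_nonneg ha x).le (norm_smul_of_nonneg hb y).le
    simpa using abs_mk_mem_of_abs_le h hsum ((abs_norm _).trans_le hle)

def splitLastCoord : EuclideanSpace ℝ (Fin 3) →ₗ[ℝ] EuclideanSpace ℝ (Fin 2) × ℝ where
  toFun x := (!₂[x 0, x 1], x 2)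
  map_add' _ _ := Prod.ext (by ext i; fin_cases i <;> rfl) rfl
  map_smul' _ _ := Prod.ext (by ext i; fin_cases i <;> rfl) rfl

theorem splitLastCoord_surjective : Function.Surjective splitLastCoord := fun ⟨v, z⟩ ↦
  ⟨!₂[v 0, v 1, z], Prod.ext (by ext i; fin_cases i <;> rfl) rfl⟩

theorem norm_splitLastCoord_fst (x : EuclideanSpace ℝ (Fin 3)) :
    ‖(splitLastCoord x).1‖ = Real.sqrt (x 0 ^ 2 + x 1 ^ 2) := by
  simp [splitLastCoord, EuclideanSpace.norm_eq, Fin.sum_univ_two]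

theorem solid_of_revolution_convex_iff_general
    (ω : Set (ℝ × ℝ)) :
    Convex ℝ {x : EuclideanSpace ℝ (Fin 3) |
        (Real.sqrt ((x 0) ^ 2 + (x 1) ^ 2), x 2) ∈ ω} ↔
      Convex ℝ {p : ℝ × ℝ | (|p.1|, p.2) ∈ ω} := by
  rw [← convex_solidOfRevolution_iff (E := EuclideanSpace ℝ (Fin 2)),
    ← Convex.linear_preimage_iff splitLastCoord splitLastCoord_surjective]
  simp only [preimage_ofPred_eq, norm_splitLastCoord_fst]
  rfl

/-- Convexity of a solid of revolution: for `ω` contained in the half-plane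
`{(r,z) : r ≥ 0}`, the rotated domain
`R(ω) = {x ∈ ℝ³ : (‖(x₁,x₂)‖, x₃) ∈ ω}` is convex if and only if the
reflection-symmetrized cross section `ω̃ = {(r,z) : (|r|,z) ∈ ω}` is convex. -/
theorem solid_of_revolution_convex_iff
    (ω : Set (ℝ × ℝ)) (hω : ∀ p ∈ ω, 0 ≤ p.1) :
    Convex ℝ {x : EuclideanSpace ℝ (Fin 3) |
        (Real.sqrt ((x 0) ^ 2 + (x 1) ^ 2), x 2) ∈ ω} ↔
      Convex ℝ {p : ℝ × ℝ | (|p.1|, p.2) ∈ ω} :=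
  solid_of_revolution_convex_iff_general ω
end
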